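/- arXiv:1507.06335 — 6 statements merged into one kernel-verified Lean document; each statement's English description precedes it below -/
import Mathlib

section
/- Let X be a real Banach space and (P_n) a sequence of bounded symmetric operators X → X* that is monotone decreasing (P_{n+1} ≤ P_n in the quadratic-form order) and bounded below by 0. Then there exists a bounded symmetric positive definite operator P such that P_n x → P x in norm in X* for every x ∈ X (strong operator convergence). -/
/-!
For `n ≤ m` the difference `P n - P m` is a positive symmetric form whose quadratic form is
bounded by `‖P 0‖ ‖y‖²`, so Cauchy–Schwarz gives `‖P n x - P m x‖² ≤ ‖P 0‖ (P n x x - P m x x)`.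
The decreasing bounded-below reals `P n x x` converge, hence `P n x` is Cauchy in the complete
space `X*`. The same estimate gives `‖P n‖ ≤ ‖P 0‖`, which makes the pointwise limit bounded.
-/

open Filter Topology

theorem CauchySeq.of_dist_le_sqrt_mul {α β : Type*} [PseudoMetricSpace α] [PseudoMetricSpace β]
    {f : ℕ → α} {g : ℕ → β} (hg : CauchySeq g) (C : ℝ)
    (h : ∀ n m, dist (f n) (f m) ≤ √(dist (g n) (g m) * C)) : CauchySeq f := by
  rw [cauchySeq_iff_tendsto_dist_atTop_0] at hg ⊢
  have hsqrt : Tendsto (fun t => √(t * C)) (𝓝 0) (𝓝 0) := by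
    simpa using (continuous_id.mul continuous_const).sqrt.tendsto (0 : ℝ)
  exact squeeze_zero (fun _ => dist_nonneg) (fun p => h p.1 p.2) (hsqrt.comp hg)

namespace ContinuousLinearMap

theorem exists_tendsto_of_norm_le {𝕜 E F ι : Type*} [NontriviallyNormedField 𝕜]
    [SeminormedAddCommGroup E] [NormedAddCommGroup F] [NormedSpace 𝕜 E] [NormedSpace 𝕜 F]
    {l : Filter ι} [l.NeBot] {T : ι → E →L[𝕜] F} {C : ℝ} (hC : ∀ i, ‖T i‖ ≤ C)
    (hT : ∀ x, ∃ y, Tendsto (fun i => T i x) l (𝓝 y)) :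
    ∃ S : E →L[𝕜] F, ∀ x, Tendsto (fun i => T i x) l (𝓝 (S x)) := by
  choose g hg using hT
  let S : E →ₗ[𝕜] F := linearMapOfTendsto g (fun i => (T i : E →ₗ[𝕜] F)) (tendsto_pi_nhds.2 hg)
  refine ⟨S.mkContinuous C fun x => ?_, hg⟩
  exact le_of_tendsto (hg x).norm (Eventually.of_forall fun i => (T i).le_of_opNorm_le (hC i) x)

section SymmetricForm

variable {X : Type*} [SeminormedAddCommGroup X] [NormedSpace ℝ X]

theorem apply_sq_le_of_symm {B : X →L[ℝ] X →L[ℝ] ℝ}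
    (hsym : ∀ x y, B x y = B y x) (hpos : ∀ x, 0 ≤ B x x) (x y : X) :
    B x y ^ 2 ≤ B x x * B y y :=
  LinearMap.BilinForm.apply_sq_le_of_symm B.toLinearMap₁₂ hpos
    (LinearMap.isSymm_def.2 fun x y => hsym x y) x y

theorem norm_apply_le_sqrt_of_symm {B : X →L[ℝ] X →L[ℝ] ℝ} {C : ℝ}
    (hsym : ∀ x y, B x y = B y x) (hpos : ∀ x, 0 ≤ B x x) (hC : ∀ y, B y y ≤ C * ‖y‖ ^ 2)
    (x : X) : ‖B x‖ ≤ √(B x x * C) := by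
  refine (B x).opNorm_le_bound (Real.sqrt_nonneg _) fun y => ?_
  calc ‖B x y‖ ≤ √(B x x * C * ‖y‖ ^ 2) := by
        refine Real.abs_le_sqrt ((B.apply_sq_le_of_symm hsym hpos x y).trans ?_)
        rw [mul_assoc]
        exact mul_le_mul_of_nonneg_left (hC y) (hpos x)
    _ = √(B x x * C) * ‖y‖ := by
        rw [Real.sqrt_mul' _ (sq_nonneg _), Real.sqrt_sq (norm_nonneg _)]

theorem norm_le_of_symm {B : X →L[ℝ] X →L[ℝ] ℝ} {C : ℝ} (hC0 : 0 ≤ C)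
    (hsym : ∀ x y, B x y = B y x) (hpos : ∀ x, 0 ≤ B x x) (hC : ∀ y, B y y ≤ C * ‖y‖ ^ 2) :
    ‖B‖ ≤ C := by
  refine B.opNorm_le_bound hC0 fun x => (B.norm_apply_le_sqrt_of_symm hsym hpos hC x).trans ?_
  calc √(B x x * C) ≤ √((C * ‖x‖) ^ 2) := by
        apply Real.sqrt_le_sqrt
        nlinarith [hC x]
    _ = C * ‖x‖ := Real.sqrt_sq (by positivity)

theorem norm_sub_apply_le_sqrt_of_symm {A B : X →L[ℝ] X →L[ℝ] ℝ} {C : ℝ}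
    (hA : ∀ x y, A x y = A y x) (hB : ∀ x y, B x y = B y x) (hBA : ∀ x, B x x ≤ A x x)
    (hB0 : ∀ x, 0 ≤ B x x) (hAC : ∀ x, A x x ≤ C * ‖x‖ ^ 2) (x : X) :
    ‖A x - B x‖ ≤ √((A x x - B x x) * C) :=
  (A - B).norm_apply_le_sqrt_of_symm (fun x y => by simp only [sub_apply, hA x y, hB x y])
    (fun x => by simpa only [sub_apply, sub_nonneg] using hBA x)
    (fun y => by simp only [sub_apply]; linarith [hAC y, hB0 y]) x

end SymmetricForm

end ContinuousLinearMap

theorem exists_strong_operator_limit_of_antitone_nonneg_general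
    {X : Type*} [NormedAddCommGroup X] [NormedSpace ℝ X]
    (P : ℕ → X →L[ℝ] X →L[ℝ] ℝ)
    (hsym : ∀ n, ∀ x y : X, P n x y = P n y x)
    (hpos : ∀ n, ∀ x : X, 0 ≤ P n x x)
    (hmono : ∀ n, ∀ x : X, P (n + 1) x x ≤ P n x x) :
    ∃ Q : X →L[ℝ] X →L[ℝ] ℝ, (∀ x y : X, Q x y = Q y x) ∧ (∀ x : X, 0 ≤ Q x x) ∧
      ∀ x : X, Tendsto (fun n => P n x) atTop (𝓝 (Q x)) := by
  have hanti (x : X) : Antitone fun n => P n x x := antitone_nat_of_succ_le fun n => hmono n x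
  have hbound (n : ℕ) (x : X) : P n x x ≤ ‖P 0‖ * ‖x‖ ^ 2 :=
    calc P n x x ≤ ‖P 0 x x‖ := (hanti x n.zero_le).trans (le_abs_self _)
      _ ≤ ‖P 0‖ * ‖x‖ * ‖x‖ := (P 0).le_opNorm₂ x x
      _ = ‖P 0‖ * ‖x‖ ^ 2 := by ring
  have hdist (x : X) (n m : ℕ) : dist (P n x) (P m x) ≤ √(dist (P n x x) (P m x x) * ‖P 0‖) := by
    wlog hnm : n ≤ m generalizing n m
    · simpa only [dist_comm] using this m n (le_of_not_ge hnm)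
    rw [dist_eq_norm, Real.dist_eq, abs_of_nonneg (sub_nonneg.2 (hanti x hnm))]
    exact ContinuousLinearMap.norm_sub_apply_le_sqrt_of_symm (hsym n) (hsym m)
      (fun y => hanti y hnm) (hpos m) (hbound n) x
  have hcauchy (x : X) : CauchySeq fun n => P n x :=
    (tendsto_atTop_ciInf (hanti x) ⟨0, by rintro _ ⟨n, rfl⟩; exact hpos n x⟩).cauchySeq
      |>.of_dist_le_sqrt_mul _ (hdist x)
  obtain ⟨Q, hQ⟩ := ContinuousLinearMap.exists_tendsto_of_norm_le
    (fun n => (P n).norm_le_of_symm (norm_nonneg (P 0)) (hsym n) (hpos n) (hbound n))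
    fun x => cauchySeq_tendsto_of_complete (hcauchy x)
  have hQapp (x y : X) : Tendsto (fun n => P n x y) atTop (𝓝 (Q x y)) :=
    ((ContinuousLinearMap.apply ℝ ℝ y).continuous.tendsto _).comp (hQ x)
  refine ⟨Q, fun x y => tendsto_nhds_unique (hQapp x y) ?_,
    fun x => ge_of_tendsto' (hQapp x x) (hpos · x), hQ⟩
  simpa only [hsym _ y x] using hQapp y x

/-- A monotone decreasing sequence of bounded symmetric operators `X → X*`,
bounded below by `0` in the quadratic-form order, converges in the strong operator topology
to a bounded symmetric positive definite operator. -/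
theorem exists_strong_operator_limit_of_antitone_nonneg
    {X : Type*} [NormedAddCommGroup X] [NormedSpace ℝ X] [CompleteSpace X]
    (P : ℕ → X →L[ℝ] X →L[ℝ] ℝ)
    (hsym : ∀ n, ∀ x y : X, P n x y = P n y x)
    (hpos : ∀ n, ∀ x : X, 0 ≤ P n x x)
    (hmono : ∀ n, ∀ x : X, P (n + 1) x x ≤ P n x x) :
    ∃ Q : X →L[ℝ] X →L[ℝ] ℝ, (∀ x y : X, Q x y = Q y x) ∧ (∀ x : X, 0 ≤ Q x x) ∧
      ∀ x : X, Tendsto (fun n => P n x) atTop (𝓝 (Q x)) :=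
  exists_strong_operator_limit_of_antitone_nonneg_general P hsym hpos hmono
end

section
/- Let X be a real Banach space and T(t) a C₀-semigroup on X. If ∫₀^∞ ‖T(t)x‖² dt < ∞ for every x ∈ X, then the Lyapunov semigroup 𝒯(t)P = T(t)* P T(t) on B(X,X*) is exponentially stable: there exist M, ε > 0 with ‖𝒯(t)‖ ≤ M e^{−εt}. Moreover ‖𝒯(t)‖ = ‖T(t)‖². -/
/-!
Testing `𝒯(t)` on `P = f ⊗ f`, where `f` is a norming functional of `T(t)x`, gives
`‖T(t)x‖² ≤ ‖𝒯(t)‖ ‖x‖²`, hence `‖𝒯(t)‖ = ‖T(t)‖²`; so it suffices to show that `T` decays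
exponentially, which is Datko's argument. Banach–Steinhaus bounds `T` on `[0, 1]`. Since
`T(t)x = T(t - s) T(s)x`, averaging `‖T(t)x‖²` over a window `s ∈ (t - a, t)` bounds
`a ‖T(t)x‖²` by the `L²` norm of the orbit; with `a = 1` and Banach–Steinhaus this makes `T`
uniformly bounded by some `M`, and then with `a = t` it gives `t ‖T(t)x‖² ≤ M² ∫ ‖T(s)x‖²`. A
third application of Banach–Steinhaus bounds `√t ‖T(t)‖`, so `‖T(t₀)‖ < 1` for some `t₀`, and the
semigroup law turns this into exponential decay.
-/

open MeasureTheory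

set_option maxSynthPendingDepth 3

/-- The Lyapunov semigroup `𝒯(t) : P ↦ T(t)* P T(t)` as a bounded linear operator
on `B(X,X*)`: `(𝒯(t)P) x y = P (T(t)x) (T(t)y)`. -/
noncomputable def lyapunovCLM {X : Type*} [NormedAddCommGroup X] [NormedSpace ℝ X]
    (T : ℝ → X →L[ℝ] X) (t : ℝ) :
    (X →L[ℝ] X →L[ℝ] ℝ) →L[ℝ] (X →L[ℝ] X →L[ℝ] ℝ) :=
  ((ContinuousLinearMap.compL ℝ X (X →L[ℝ] ℝ) (X →L[ℝ] ℝ))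
      ((ContinuousLinearMap.compL ℝ X X ℝ).flip (T t))).comp
    ((ContinuousLinearMap.compL ℝ X X (X →L[ℝ] ℝ)).flip (T t))

open Set ContinuousLinearMap

section LyapunovNorm

variable {X : Type*} [NormedAddCommGroup X] [NormedSpace ℝ X]

theorem lyapunovCLM_apply (T : ℝ → X →L[ℝ] X) (t : ℝ) (P : X →L[ℝ] X →L[ℝ] ℝ) (x y : X) :
    lyapunovCLM T t P x y = P (T t x) (T t y) := rfl

theorem sq_norm_apply_le_norm_lyapunovCLM_mul (T : ℝ → X →L[ℝ] X) (t : ℝ) (x : X) :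
    ‖T t x‖ ^ 2 ≤ ‖lyapunovCLM T t‖ * ‖x‖ ^ 2 := by
  obtain ⟨f, hf, hfx⟩ := exists_dual_vector'' ℝ (T t x)
  have hP : ‖f.smulRight f‖ ≤ 1 := by
    rw [norm_smulRight_apply]
    exact mul_le_one₀ hf (norm_nonneg f) hf
  calc ‖T t x‖ ^ 2 = lyapunovCLM T t (f.smulRight f) x x := by
        simp [lyapunovCLM_apply, hfx, sq]
    _ ≤ ‖lyapunovCLM T t (f.smulRight f)‖ * ‖x‖ * ‖x‖ :=
        (Real.le_norm_self _).trans (le_opNorm₂ _ x x)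
    _ ≤ ‖lyapunovCLM T t‖ * ‖f.smulRight f‖ * ‖x‖ * ‖x‖ := by
        gcongr; exact le_opNorm _ _
    _ ≤ ‖lyapunovCLM T t‖ * ‖x‖ ^ 2 := by
        rw [sq, ← mul_assoc]; gcongr; exact mul_le_of_le_one_right (norm_nonneg _) hP

theorem norm_lyapunovCLM (T : ℝ → X →L[ℝ] X) (t : ℝ) :
    ‖lyapunovCLM T t‖ = ‖T t‖ ^ 2 := by
  refine le_antisymm ?_ ?_
  · refine opNorm_le_bound _ (by positivity) fun P => opNorm_le_bound₂ _ (by positivity) ?_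
    intro x y
    calc ‖P (T t x) (T t y)‖ ≤ ‖P‖ * ‖T t x‖ * ‖T t y‖ := le_opNorm₂ P _ _
      _ ≤ ‖P‖ * (‖T t‖ * ‖x‖) * (‖T t‖ * ‖y‖) := by gcongr <;> exact le_opNorm _ _
      _ = ‖T t‖ ^ 2 * ‖P‖ * ‖x‖ * ‖y‖ := by ring
  · have h : ‖T t‖ ≤ √‖lyapunovCLM T t‖ := opNorm_le_bound _ (Real.sqrt_nonneg _) fun x => by
      rw [← Real.sqrt_sq (norm_nonneg x), ← Real.sqrt_mul (norm_nonneg _)]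
      exact Real.le_sqrt_of_sq_le (sq_norm_apply_le_norm_lyapunovCLM_mul T t x)
    exact (Real.le_sqrt (norm_nonneg _) (norm_nonneg _)).mp h

end LyapunovNorm

section BanachSteinhaus

variable {α 𝕜 E F : Type*} [NontriviallyNormedField 𝕜] [NormedAddCommGroup E] [NormedSpace 𝕜 E]
  [CompleteSpace E] [NormedAddCommGroup F] [NormedSpace 𝕜 F]

theorem banach_steinhaus_on {s : Set α} {g : α → E →L[𝕜] F}
    (h : ∀ x, ∃ C, ∀ i ∈ s, ‖g i x‖ ≤ C) : ∃ C', ∀ i ∈ s, ‖g i‖ ≤ C' := by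
  obtain ⟨C', hC'⟩ := banach_steinhaus (g := fun i : s => g i) fun x =>
    (h x).imp fun C hC i => hC i i.2
  exact ⟨C', fun i hi => hC' ⟨i, hi⟩⟩

theorem IsCompact.exists_forall_norm_le_of_continuousOn_apply [TopologicalSpace α] {K : Set α}
    (hK : IsCompact K) {g : α → E →L[𝕜] F} (hg : ∀ x, ContinuousOn (fun t => g t x) K) :
    ∃ C, ∀ t ∈ K, ‖g t‖ ≤ C :=
  banach_steinhaus_on fun x => hK.exists_bound_of_continuousOn (hg x)

end BanachSteinhaus

section Semigroup

variable {X : Type*} [NormedAddCommGroup X] [NormedSpace ℝ X] {T : ℝ → X →L[ℝ] X}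

theorem norm_apply_le_norm_sub_mul_norm_apply
    (hTadd : ∀ s t : ℝ, 0 ≤ s → 0 ≤ t → T (s + t) = (T s).comp (T t))
    {s t : ℝ} (hs : 0 ≤ s) (hst : s ≤ t) (x : X) : ‖T t x‖ ≤ ‖T (t - s)‖ * ‖T s x‖ := by
  have hT : T t = (T (t - s)).comp (T s) := by
    rw [← hTadd _ _ (sub_nonneg.mpr hst) hs, sub_add_cancel]
  rw [hT]
  exact (T (t - s)).le_opNorm (T s x)

theorem mul_sq_norm_apply_le_integral
    (hTadd : ∀ s t : ℝ, 0 ≤ s → 0 ≤ t → T (s + t) = (T s).comp (T t))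
    {x : X} (hL2 : IntegrableOn (fun t => ‖T t x‖ ^ 2) (Ioi 0)) {a t C : ℝ}
    (ha : 0 ≤ a) (hat : a ≤ t) (hC : ∀ r ∈ Icc 0 a, ‖T r‖ ≤ C) :
    a * ‖T t x‖ ^ 2 ≤ C ^ 2 * ∫ s in Ioi 0, ‖T s x‖ ^ 2 := by
  have hwindow : Ioo (t - a) t ⊆ Ioi 0 := fun s hs => (sub_nonneg.mpr hat).trans_lt hs.1
  have hpointwise : ∀ s ∈ Ioo (t - a) t, ‖T t x‖ ^ 2 ≤ C ^ 2 * ‖T s x‖ ^ 2 := by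
    intro s hs
    have hb : ‖T t x‖ ≤ C * ‖T s x‖ :=
      (norm_apply_le_norm_sub_mul_norm_apply hTadd (hwindow hs).le hs.2.le x).trans
        (by gcongr; exact hC _ ⟨by linarith [hs.2], by linarith [hs.1]⟩)
    rw [← mul_pow]
    exact pow_le_pow_left₀ (norm_nonneg _) hb 2
  calc a * ‖T t x‖ ^ 2 = ∫ s in Ioo (t - a) t, ‖T t x‖ ^ 2 := by
        simp [Real.volume_real_Ioo_of_le (sub_le_self t ha)]
    _ ≤ ∫ s in Ioo (t - a) t, C ^ 2 * ‖T s x‖ ^ 2 :=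
        setIntegral_mono_on (integrableOn_const (by simp))
          ((hL2.mono_set hwindow).const_mul _) measurableSet_Ioo hpointwise
    _ = C ^ 2 * ∫ s in Ioo (t - a) t, ‖T s x‖ ^ 2 := integral_const_mul _ _
    _ ≤ C ^ 2 * ∫ s in Ioi 0, ‖T s x‖ ^ 2 := mul_le_mul_of_nonneg_left
        (setIntegral_mono_set hL2 (.of_forall fun s => by positivity) hwindow.eventuallyLE)
        (sq_nonneg C)

theorem exists_forall_nonneg_norm_le [CompleteSpace X]
    (hTadd : ∀ s t : ℝ, 0 ≤ s → 0 ≤ t → T (s + t) = (T s).comp (T t))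
    (hTcont : ∀ x : X, ContinuousOn (fun t => T t x) (Ici 0))
    (hL2 : ∀ x : X, IntegrableOn (fun t => ‖T t x‖ ^ 2) (Ioi 0)) :
    ∃ M, ∀ t, 0 ≤ t → ‖T t‖ ≤ M := by
  obtain ⟨C, hC⟩ := (isCompact_Icc (a := 0) (b := 1)).exists_forall_norm_le_of_continuousOn_apply
    fun x => (hTcont x).mono Icc_subset_Ici_self
  refine banach_steinhaus_on (s := Ici 0) fun x =>
    ⟨max (C * ‖x‖) √(C ^ 2 * ∫ s in Ioi 0, ‖T s x‖ ^ 2), fun t (ht : 0 ≤ t) => ?_⟩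
  rcases le_total t 1 with h1 | h1
  · exact le_max_of_le_left ((T t).le_of_opNorm_le (hC t ⟨ht, h1⟩) x)
  · refine le_max_of_le_right (Real.le_sqrt_of_sq_le ?_)
    simpa using mul_sq_norm_apply_le_integral hTadd (hL2 x) zero_le_one h1 hC

theorem exists_forall_sqrt_mul_norm_le [CompleteSpace X]
    (hTadd : ∀ s t : ℝ, 0 ≤ s → 0 ≤ t → T (s + t) = (T s).comp (T t))
    (hL2 : ∀ x : X, IntegrableOn (fun t => ‖T t x‖ ^ 2) (Ioi 0))
    {M : ℝ} (hM : ∀ t, 0 ≤ t → ‖T t‖ ≤ M) :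
    ∃ L, ∀ t, 0 ≤ t → √t * ‖T t‖ ≤ L := by
  obtain ⟨L, hL⟩ := banach_steinhaus_on (s := Ici 0) (g := fun t => √t • T t) fun x =>
    ⟨√(M ^ 2 * ∫ s in Ioi 0, ‖T s x‖ ^ 2), fun t (ht : 0 ≤ t) => by
      rw [smul_apply, norm_smul, Real.norm_of_nonneg (Real.sqrt_nonneg t)]
      refine Real.le_sqrt_of_sq_le ?_
      rw [mul_pow, Real.sq_sqrt ht]
      exact mul_sq_norm_apply_le_integral hTadd (hL2 x) ht le_rfl fun r hr => hM r hr.1⟩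
  refine ⟨L, fun t ht => ?_⟩
  simpa [norm_smul, Real.norm_of_nonneg (Real.sqrt_nonneg t)] using hL t ht

theorem exists_pos_norm_lt_one [CompleteSpace X]
    (hTadd : ∀ s t : ℝ, 0 ≤ s → 0 ≤ t → T (s + t) = (T s).comp (T t))
    (hL2 : ∀ x : X, IntegrableOn (fun t => ‖T t x‖ ^ 2) (Ioi 0))
    {M : ℝ} (hM : ∀ t, 0 ≤ t → ‖T t‖ ≤ M) :
    ∃ t₀, 0 < t₀ ∧ ‖T t₀‖ < 1 := by
  obtain ⟨L, hL⟩ := exists_forall_sqrt_mul_norm_le hTadd hL2 hM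
  have hL0 : 0 ≤ L := by simpa using hL 0 le_rfl
  have hlt : L < √(L ^ 2 + 1) := (Real.lt_sqrt hL0).mpr (lt_add_one _)
  refine ⟨L ^ 2 + 1, by positivity, ?_⟩
  by_contra! h
  nlinarith [hL (L ^ 2 + 1) (by positivity)]

theorem norm_add_mul_le_mul_pow
    (hTadd : ∀ s t : ℝ, 0 ≤ s → 0 ≤ t → T (s + t) = (T s).comp (T t))
    {M : ℝ} (hM : ∀ t, 0 ≤ t → ‖T t‖ ≤ M) {s t₀ : ℝ} (hs : 0 ≤ s) (ht₀ : 0 ≤ t₀) (n : ℕ) :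
    ‖T (s + n * t₀)‖ ≤ M * ‖T t₀‖ ^ n := by
  induction n with
  | zero => simpa using hM s hs
  | succ n ih =>
    rw [Nat.cast_succ, add_one_mul, ← add_assoc, hTadd _ _ (by positivity) ht₀, pow_succ,
      ← mul_assoc]
    exact (opNorm_comp_le _ _).trans (mul_le_mul_of_nonneg_right ih (norm_nonneg _))

theorem exists_exp_decay_of_norm_lt_one
    (hTadd : ∀ s t : ℝ, 0 ≤ s → 0 ≤ t → T (s + t) = (T s).comp (T t))
    {M : ℝ} (hM : ∀ t, 0 ≤ t → ‖T t‖ ≤ M) {t₀ : ℝ} (ht₀ : 0 < t₀) (h : ‖T t₀‖ < 1) :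
    ∃ M' ε : ℝ, 0 < M' ∧ 0 < ε ∧ ∀ t, 0 ≤ t → ‖T t‖ ≤ M' * Real.exp (-ε * t) := by
  set q := max ‖T t₀‖ (1 / 2)
  have hq0 : 0 < q := lt_max_of_lt_right one_half_pos
  have hlogq : Real.log q < 0 := Real.log_neg hq0 (max_lt h one_half_lt_one)
  have hM0 : 0 ≤ M := (norm_nonneg _).trans (hM 0 le_rfl)
  refine ⟨(M + 1) / q, -Real.log q / t₀, by positivity, div_pos (neg_pos.mpr hlogq) ht₀,
    fun t ht => ?_⟩
  set n := ⌊t / t₀⌋₊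
  have hnt : n * t₀ ≤ t := (le_div_iff₀ ht₀).mp (Nat.floor_le (by positivity))
  have hpow : q ^ (n + 1) ≤ Real.exp (-(-Real.log q / t₀) * t) := by
    rw [← Real.exp_log hq0, ← Real.exp_nat_mul, Real.exp_log hq0]
    refine Real.exp_le_exp.mpr ?_
    have hn : t / t₀ ≤ (n + 1 : ℕ) := by push_cast; exact (Nat.lt_floor_add_one _).le
    calc ((n + 1 : ℕ) : ℝ) * Real.log q ≤ t / t₀ * Real.log q :=
          mul_le_mul_of_nonpos_right hn hlogq.le
      _ = -(-Real.log q / t₀) * t := by ring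
  calc ‖T t‖ = ‖T (t - n * t₀ + n * t₀)‖ := by rw [sub_add_cancel]
    _ ≤ M * ‖T t₀‖ ^ n := norm_add_mul_le_mul_pow hTadd hM (by linarith) ht₀.le n
    _ ≤ (M + 1) * q ^ n := mul_le_mul (by linarith)
        (pow_le_pow_left₀ (norm_nonneg _) (le_max_left _ _) n) (by positivity) (by linarith)
    _ = (M + 1) / q * q ^ (n + 1) := by field_simp; ring
    _ ≤ (M + 1) / q * Real.exp (-(-Real.log q / t₀) * t) := by gcongr

end Semigroup

theorem lyapunovSemigroup_exponentially_stable_of_L2_general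
    {X : Type*} [NormedAddCommGroup X] [NormedSpace ℝ X] [CompleteSpace X]
    (T : ℝ → X →L[ℝ] X)
    (hTadd : ∀ s t : ℝ, 0 ≤ s → 0 ≤ t → T (s + t) = (T s).comp (T t))
    (hTcont : ∀ x : X, ContinuousOn (fun t => T t x) (Set.Ici (0 : ℝ)))
    (hL2 : ∀ x : X, IntegrableOn (fun t => ‖T t x‖ ^ 2) (Set.Ioi (0 : ℝ))) :
    (∃ M ε : ℝ, 0 < M ∧ 0 < ε ∧
      ∀ t : ℝ, 0 ≤ t → ‖lyapunovCLM T t‖ ≤ M * Real.exp (-ε * t)) ∧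
    (∀ t : ℝ, 0 ≤ t → ‖lyapunovCLM T t‖ = ‖T t‖ ^ 2) := by
  obtain ⟨M, hM⟩ := exists_forall_nonneg_norm_le hTadd hTcont hL2
  obtain ⟨t₀, ht₀, hT₀⟩ := exists_pos_norm_lt_one hTadd hL2 hM
  obtain ⟨N, ε, hN, hε, hdecay⟩ := exists_exp_decay_of_norm_lt_one hTadd hM ht₀ hT₀
  refine ⟨⟨N ^ 2, 2 * ε, by positivity, by positivity, fun t ht => ?_⟩,
    fun t _ => norm_lyapunovCLM T t⟩
  calc ‖lyapunovCLM T t‖ = ‖T t‖ ^ 2 := norm_lyapunovCLM T t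
    _ ≤ (N * Real.exp (-ε * t)) ^ 2 := pow_le_pow_left₀ (norm_nonneg _) (hdecay t ht) 2
    _ = N ^ 2 * Real.exp (-(2 * ε) * t) := by rw [mul_pow, ← Real.exp_nat_mul]; ring_nf

/-- If `∫₀^∞ ‖T(t)x‖² dt < ∞` for every `x`, then the Lyapunov semigroup
`𝒯(t)P = T(t)* P T(t)` on `B(X,X*)` is exponentially stable: `‖𝒯(t)‖ ≤ M e^{−εt}`.
Moreover `‖𝒯(t)‖ = ‖T(t)‖²`. -/
theorem lyapunovSemigroup_exponentially_stable_of_L2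
    {X : Type*} [NormedAddCommGroup X] [NormedSpace ℝ X] [CompleteSpace X]
    (T : ℝ → X →L[ℝ] X)
    (hT0 : T 0 = ContinuousLinearMap.id ℝ X)
    (hTadd : ∀ s t : ℝ, 0 ≤ s → 0 ≤ t → T (s + t) = (T s).comp (T t))
    (hTcont : ∀ x : X, ContinuousOn (fun t => T t x) (Set.Ici (0 : ℝ)))
    (hL2 : ∀ x : X, IntegrableOn (fun t => ‖T t x‖ ^ 2) (Set.Ioi (0 : ℝ))) :
    (∃ M ε : ℝ, 0 < M ∧ 0 < ε ∧
      ∀ t : ℝ, 0 ≤ t → ‖lyapunovCLM T t‖ ≤ M * Real.exp (-ε * t)) ∧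
    (∀ t : ℝ, 0 ≤ t → ‖lyapunovCLM T t‖ = ‖T t‖ ^ 2) :=
  lyapunovSemigroup_exponentially_stable_of_L2_general T hTadd hTcont hL2
end

section
/- Let 𝒳 be an ordered Banach space, 𝒜 a linear operator with bounded inverse such that −𝒜⁻¹ is positive (maps the cone into itself), and Φ : 𝒳⁺ → 𝒳 a Gateaux differentiable order concave map. Suppose x and x∞ are both in the domain of 𝒜, lie in the cone, and both satisfy F(x) := 𝒜x + Φ(x) = 0, where additionally 𝒜 + Φ'(x∞) has bounded inverse with −(𝒜+Φ'(x∞))⁻¹ ≥ 0 and 𝒜 + Φ'(x) has bounded inverse with −(𝒜+Φ'(x))⁻¹ ≥ 0. Then x = x∞. -/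
open Filter Topology

/-- Uniqueness of stabilizing solutions of quasi-linear order concave
equations. `𝒳` is a Banach space ordered by a closed proper cone `K`; `𝒜` is a linear
operator (domain `D`) with bounded inverse `J₀` such that `−𝒜⁻¹ ≥ 0`; `Φ` is Gateaux
differentiable and order concave on the cone. If `x` and `xinf` lie in `D ∩ K`, both solve
`F(u) := 𝒜u + Φ(u) = 0`, and both `𝒜 + Φ'(xinf)` and `𝒜 + Φ'(x)` have bounded inverses
whose negatives are positive, then `x = xinf`. -/
theorem concave_equation_stabilizing_solution_unique
    {𝒳 : Type*} [NormedAddCommGroup 𝒳] [NormedSpace ℝ 𝒳] [CompleteSpace 𝒳]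
    (K : Set 𝒳) (hKclosed : IsClosed K) (hK0 : (0 : 𝒳) ∈ K)
    (hKadd : ∀ a b : 𝒳, a ∈ K → b ∈ K → a + b ∈ K)
    (hKsmul : ∀ (c : ℝ) (a : 𝒳), 0 ≤ c → a ∈ K → c • a ∈ K)
    (hKproper : ∀ a : 𝒳, a ∈ K → -a ∈ K → a = 0)
    (D : Submodule ℝ 𝒳) (𝒜 : D →ₗ[ℝ] 𝒳)
    (Φ : 𝒳 → 𝒳) (Φ' : 𝒳 → 𝒳 →L[ℝ] 𝒳)
    (hGateaux : ∀ u ∈ K, ∀ h : 𝒳,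
      Tendsto (fun t : ℝ => t⁻¹ • (Φ (u + t • h) - Φ u)) (𝓝[>] 0) (𝓝 (Φ' u h)))
    (hconc : ∀ u ∈ K, ∀ v ∈ K, Φ' u (v - u) - (Φ v - Φ u) ∈ K)
    (J₀ : 𝒳 →L[ℝ] 𝒳) (hJ₀ : ∀ u : D, J₀ (𝒜 u) = u)
    (hJ₀pos : ∀ z ∈ K, -(J₀ z) ∈ K)
    (x xinf : 𝒳) (hxD : x ∈ D) (hxinfD : xinf ∈ D) (hxK : x ∈ K) (hxinfK : xinf ∈ K)
    (hFx : 𝒜 ⟨x, hxD⟩ + Φ x = 0) (hFxinf : 𝒜 ⟨xinf, hxinfD⟩ + Φ xinf = 0)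
    (Jinf : 𝒳 →L[ℝ] 𝒳) (hJinf : ∀ u : D, Jinf (𝒜 u + Φ' xinf u) = u)
    (hJinfpos : ∀ z ∈ K, -(Jinf z) ∈ K)
    (J : 𝒳 →L[ℝ] 𝒳) (hJ : ∀ u : D, J (𝒜 u + Φ' x u) = u)
    (hJpos : ∀ z ∈ K, -(J z) ∈ K) :
    x = xinf := by
  set d : D := ⟨xinf - x, sub_mem hxinfD hxD⟩ with hd
  have hAd : 𝒜 d = Φ x - Φ xinf := by
    have hde : d = ⟨xinf, hxinfD⟩ - ⟨x, hxD⟩ := rfl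
    rw [hde, map_sub]
    have h1 : 𝒜 ⟨x, hxD⟩ = -Φ x := eq_neg_of_add_eq_zero_left hFx
    have h2 : 𝒜 ⟨xinf, hxinfD⟩ = -Φ xinf := eq_neg_of_add_eq_zero_left hFxinf
    rw [h1, h2]; abel
  have hz1 : 𝒜 d + Φ' x (d : 𝒳) ∈ K := by
    have hde : (d : 𝒳) = xinf - x := rfl
    rw [hde, hAd]
    have he : Φ x - Φ xinf + Φ' x (xinf - x) = Φ' x (xinf - x) - (Φ xinf - Φ x) := by abel
    rw [he]
    exact hconc x hxK xinf hxinfK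
  have h1 : -(xinf - x) ∈ K := by
    have h := hJpos _ hz1
    rwa [hJ d] at h
  have hnde : ((-d : D) : 𝒳) = x - xinf := by
    show -(xinf - x) = x - xinf; abel
  have hz2 : 𝒜 (-d) + Φ' xinf ((-d : D) : 𝒳) ∈ K := by
    rw [map_neg, hAd, hnde]
    have he : -(Φ x - Φ xinf) + Φ' xinf (x - xinf)
        = Φ' xinf (x - xinf) - (Φ x - Φ xinf) := by abel
    rw [he]
    exact hconc xinf hxinfK x hxK
  have h2 : -(x - xinf) ∈ K := by
    have h := hJinfpos _ hz2
    rw [hJinf (-d), hnde] at h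
    exact h
  have h3 : x - xinf = 0 := hKproper _ (by rwa [neg_sub] at h1) h2
  exact sub_eq_zero.mp h3
end

section
/- Let 𝒳 be an ordered Banach space, 𝒜 a linear operator, Φ Gateaux differentiable and order concave (Φ(v) − Φ(u) ≤ Φ'(u)(v−u)). Suppose x is in the domain of 𝒜 with F(x) := 𝒜x + Φ(x) ≤ 0, that 𝒜 + Φ'(x) is invertible with −(𝒜+Φ'(x))⁻¹ positive, and that y solves F(x) + (𝒜 + Φ'(x))(y − x) = 0. Then y ≤ x. -/
/-- Monotonicity of Newton's iteration for order concave maps. If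
`F(x) := 𝒜x + Φ(x) ≤ 0`, `𝒜 + Φ'(x)` is invertible with `−(𝒜 + Φ'(x))⁻¹` positive,
and `y` solves `F(x) + (𝒜 + Φ'(x))(y − x) = 0`, then `y ≤ x`. -/
theorem newton_step_monotone
    {𝒳 : Type*} [NormedAddCommGroup 𝒳] [NormedSpace ℝ 𝒳] [CompleteSpace 𝒳]
    (K : Set 𝒳) (hKclosed : IsClosed K) (hK0 : (0 : 𝒳) ∈ K)
    (hKadd : ∀ a b : 𝒳, a ∈ K → b ∈ K → a + b ∈ K)
    (hKsmul : ∀ (c : ℝ) (a : 𝒳), 0 ≤ c → a ∈ K → c • a ∈ K)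
    (hKproper : ∀ a : 𝒳, a ∈ K → -a ∈ K → a = 0)
    (D : Submodule ℝ 𝒳) (𝒜 : D →ₗ[ℝ] 𝒳)
    (Φ : 𝒳 → 𝒳) (Φ' : 𝒳 → 𝒳 →L[ℝ] 𝒳)
    (hconc : ∀ u v : 𝒳, Φ' u (v - u) - (Φ v - Φ u) ∈ K)
    (x y : 𝒳) (hxD : x ∈ D) (hyD : y ∈ D)
    (hFx : -(𝒜 ⟨x, hxD⟩ + Φ x) ∈ K)
    (J : 𝒳 →L[ℝ] 𝒳) (hJ : ∀ u : D, J (𝒜 u + Φ' x u) = u)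
    (hJpos : ∀ z ∈ K, -(J z) ∈ K)
    (hy : (𝒜 ⟨x, hxD⟩ + Φ x) + (𝒜 (⟨y, hyD⟩ - ⟨x, hxD⟩) + Φ' x (y - x)) = 0) :
    x - y ∈ K := by
  have key : 𝒜 (⟨y, hyD⟩ - ⟨x, hxD⟩) + Φ' x (y - x) = -(𝒜 ⟨x, hxD⟩ + Φ x) := by
    exact eq_neg_of_add_eq_zero_right hy
  have h1 : J (-(𝒜 ⟨x, hxD⟩ + Φ x)) = y - x := by
    rw [← key]
    have := hJ (⟨y, hyD⟩ - ⟨x, hxD⟩)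
    simpa using this
  have := hJpos _ hFx
  rw [h1] at this
  simpa using this
end

section
/- Let X be a real Banach space, A, G with A the generator of a C₀-semigroup on X and G bounded. For a symmetric P ∈ B(X,X*) with P(D_A) ⊆ D_{A*}, the closures satisfy (A+G)*P + P(A+G) = (A*P + PA) + (G*P + PG) as bounded operators, whenever A*P + PA is bounded on D_A. In particular the Lyapunov generators satisfy L_{A+G} = L_A + L_G with equal domains. -/
open Filter Topology

/-- Additivity of Lyapunov generators under bounded perturbation. Let `A`
generate a C₀-semigroup `T(t)` on `X` and `G ∈ B(X)`. For symmetric `P ∈ B(X,X*)`,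
membership in the domain of the Lyapunov generator is characterized (via duality) by the
existence of a bounded operator `S` with `⟨Sx, y⟩ = ⟨Px, Ay⟩ + ⟨PAx, y⟩` on `D_A`
(`S` is the closure of `A*P + PA`). Then `P` is in the domain for `A` iff it is in the
domain for `A + G`, and the closures satisfy
`(A+G)*P + P(A+G) = (A*P + PA) + (G*P + PG)`, where
`(G*P + PG) x y = ⟨Px, Gy⟩ + ⟨PGx, y⟩`; i.e. `L_{A+G} = L_A + L_G` with equal domains. -/
theorem lyapunov_generator_additive
    {X : Type*} [NormedAddCommGroup X] [NormedSpace ℝ X] [CompleteSpace X]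
    (T : ℝ → X →L[ℝ] X)
    (hT0 : T 0 = ContinuousLinearMap.id ℝ X)
    (hTadd : ∀ s t : ℝ, 0 ≤ s → 0 ≤ t → T (s + t) = (T s).comp (T t))
    (hTcont : ∀ x : X, ContinuousOn (fun t => T t x) (Set.Ici (0 : ℝ)))
    (DA : Set X) (A : X → X) (hDA : Dense DA)
    (hA : ∀ x ∈ DA, Tendsto (fun h : ℝ => h⁻¹ • (T h x - x)) (𝓝[>] 0) (𝓝 (A x)))
    (G : X →L[ℝ] X)
    (P : X →L[ℝ] X →L[ℝ] ℝ) (hPsym : ∀ x y : X, P x y = P y x) :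
    ((∃ S : X →L[ℝ] X →L[ℝ] ℝ, ∀ x ∈ DA, ∀ y ∈ DA, S x y = P x (A y) + P (A x) y) ↔
      (∃ S' : X →L[ℝ] X →L[ℝ] ℝ, ∀ x ∈ DA, ∀ y ∈ DA,
        S' x y = P x (A y + G y) + P (A x + G x) y)) ∧
    (∀ S : X →L[ℝ] X →L[ℝ] ℝ, (∀ x ∈ DA, ∀ y ∈ DA, S x y = P x (A y) + P (A x) y) →
      ∀ x ∈ DA, ∀ y ∈ DA,
        (S + (((ContinuousLinearMap.compL ℝ X X ℝ).flip G).comp P + P.comp G)) x y =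
          P x (A y + G y) + P (A x + G x) y) := by
  set Q : X →L[ℝ] X →L[ℝ] ℝ :=
    ((ContinuousLinearMap.compL ℝ X X ℝ).flip G).comp P + P.comp G with hQ
  have hQval : ∀ x y : X, Q x y = P x (G y) + P (G x) y := by
    intro x y; simp [hQ, ContinuousLinearMap.compL]
  have key : ∀ (S : X →L[ℝ] X →L[ℝ] ℝ),
      (∀ x ∈ DA, ∀ y ∈ DA, S x y = P x (A y) + P (A x) y) →
      ∀ x ∈ DA, ∀ y ∈ DA, (S + Q) x y = P x (A y + G y) + P (A x + G x) y := by
    intro S hS x hx y hy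
    have := hS x hx y hy
    simp [ContinuousLinearMap.add_apply, this, hQval, map_add,
      ContinuousLinearMap.add_apply]
    ring
  refine ⟨⟨fun ⟨S, hS⟩ => ⟨S + Q, key S hS⟩, fun ⟨S', hS'⟩ => ⟨S' - Q, ?_⟩⟩, key⟩
  intro x hx y hy
  have := hS' x hx y hy
  simp only [ContinuousLinearMap.sub_apply, this, hQval, map_add,
    ContinuousLinearMap.add_apply]
  ring
end

section
/- Let X be a real Banach space such that there exists E ∈ B(X, X*) symmetric with the property that for every symmetric R ∈ B(X,X*) there exists t > 0 with ⟨(tE − R)x, x⟩ ≥ 0 for all x. Then ⟨Ex,x⟩ ≥ a‖x‖² for some a > 0 and hence x ↦ ⟨Ex,x⟩^{1/2} is an equivalent norm making X isomorphic to a Hilbert space (i.e., the norm ⟨Ex,x⟩^{1/2} satisfies the parallelogram law and is equivalent to ‖·‖). -/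
/-!
If `E` is not coercive, pick `xₙ ≠ 0` with `E xₙ xₙ < 4⁻ⁿ ‖xₙ‖²` and norming functionals `φₙ`.
The symmetric form `R = ∑ 2⁻ⁿ φₙ ⊗ φₙ` has `R xₙ xₙ ≥ 2⁻ⁿ ‖xₙ‖²`, so any `t` with `R ≤ t E`
satisfies `t > 2ⁿ` for every `n`, which is absurd. Once `E` is coercive, `⟨Ex, x⟩` is a
bounded, nonnegative quadratic form, and the parallelogram law holds for any bilinear form.
-/

theorem LinearMap.parallelogram_law {R M : Type*} [CommRing R] [AddCommGroup M] [Module R M]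
    (B : M →ₗ[R] M →ₗ[R] R) (x y : M) :
    B (x + y) (x + y) + B (x - y) (x - y) = 2 * B x x + 2 * B y y := by
  simp only [map_add, map_sub, LinearMap.add_apply, LinearMap.sub_apply]
  ring

section

variable {X : Type*} [SeminormedAddCommGroup X] [NormedSpace ℝ X]

theorem ContinuousLinearMap.apply_self_le_opNorm_mul_sq (B : X →L[ℝ] X →L[ℝ] ℝ) (x : X) :
    B x x ≤ ‖B‖ * ‖x‖ ^ 2 :=
  calc B x x ≤ ‖B x x‖ := le_abs_self _
    _ ≤ ‖B‖ * ‖x‖ * ‖x‖ := B.le_opNorm₂ x x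
    _ = ‖B‖ * ‖x‖ ^ 2 := by ring

theorem ContinuousLinearMap.hasSum_apply_apply {ι : Type*} {f : ι → X →L[ℝ] X →L[ℝ] ℝ}
    {B : X →L[ℝ] X →L[ℝ] ℝ} (hf : HasSum f B) (x y : X) :
    HasSum (fun i ↦ f i x y) (B x y) :=
  (hf.mapL (apply ℝ (X →L[ℝ] ℝ) x)).mapL (apply ℝ ℝ y)

noncomputable def weightedSquareSum (φ : ℕ → StrongDual ℝ X) : X →L[ℝ] X →L[ℝ] ℝ :=
  ∑' n, (2⁻¹ : ℝ) ^ n • (φ n).smulRight (φ n)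

variable {φ : ℕ → StrongDual ℝ X}

theorem hasSum_weightedSquareSum_apply (hφ : ∀ n, ‖φ n‖ ≤ 1) (x y : X) :
    HasSum (fun n ↦ (2⁻¹ : ℝ) ^ n * (φ n x * φ n y)) (weightedSquareSum φ x y) := by
  have hsummable : Summable fun n ↦ (2⁻¹ : ℝ) ^ n • (φ n).smulRight (φ n) := by
    refine .of_norm_bounded (E := X →L[ℝ] X →L[ℝ] ℝ)
      (summable_geometric_of_lt_one (by norm_num) (by norm_num : (2⁻¹ : ℝ) < 1)) fun n ↦ ?_
    calc _ ≤ ‖(2⁻¹ : ℝ) ^ n‖ * ‖(φ n).smulRight (φ n)‖ :=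
          ContinuousLinearMap.opNorm_smul_le _ _
      _ = (2⁻¹ : ℝ) ^ n * (‖φ n‖ * ‖φ n‖) := by
        rw [ContinuousLinearMap.norm_smulRight_apply, norm_pow, norm_inv, Real.norm_two]
      _ ≤ 2⁻¹ ^ n * (1 * 1) := by gcongr <;> exact hφ n
      _ = 2⁻¹ ^ n := by ring
  convert ContinuousLinearMap.hasSum_apply_apply hsummable.hasSum x y using 1
  · ext n
    simp only [smul_apply, ContinuousLinearMap.smulRight_apply, smul_eq_mul]
  · rfl

theorem weightedSquareSum_symm (hφ : ∀ n, ‖φ n‖ ≤ 1) (x y : X) :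
    weightedSquareSum φ x y = weightedSquareSum φ y x :=
  (hasSum_weightedSquareSum_apply hφ x y).unique <| by
    simpa only [mul_comm (φ _ x)] using hasSum_weightedSquareSum_apply hφ y x

theorem pow_mul_sq_le_weightedSquareSum (hφ : ∀ n, ‖φ n‖ ≤ 1) (x : X) (n : ℕ) :
    (2⁻¹ : ℝ) ^ n * φ n x ^ 2 ≤ weightedSquareSum φ x x := by
  rw [sq]
  exact le_hasSum (hasSum_weightedSquareSum_apply hφ x x) n fun m _ ↦
    mul_nonneg (by positivity) (mul_self_nonneg _)

end

theorem exists_coercive_of_dominates_symmetric {X : Type*} [NormedAddCommGroup X]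
    [NormedSpace ℝ X] (E : X →L[ℝ] X →L[ℝ] ℝ)
    (hdom : ∀ R : X →L[ℝ] X →L[ℝ] ℝ, (∀ x y : X, R x y = R y x) →
      ∃ t : ℝ, 0 < t ∧ ∀ x : X, 0 ≤ (t • E - R) x x) :
    ∃ a : ℝ, 0 < a ∧ ∀ x : X, a * ‖x‖ ^ 2 ≤ E x x := by
  by_contra! hcoer
  choose x hx using fun n : ℕ ↦ hcoer (((2⁻¹ : ℝ) ^ n) ^ 2) (by positivity)
  have hx_pos (n : ℕ) : 0 < ‖x n‖ := by
    refine norm_pos_iff.2 fun h ↦ ?_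
    simpa [h] using hx n
  choose φ hφ_norm hφ_x using fun n ↦ exists_dual_vector ℝ (x n) (hx_pos n).ne'
  have hφ (n : ℕ) : ‖φ n‖ ≤ 1 := (hφ_norm n).le
  obtain ⟨t, ht, hR⟩ := hdom _ (weightedSquareSum_symm hφ)
  obtain ⟨n, hn⟩ := pow_unbounded_of_one_lt t one_lt_two
  have hxn := hx n
  have hRn := pow_mul_sq_le_weightedSquareSum hφ (x n) n
  have hdomn := hR (x n)
  simp only [hφ_x, sub_apply, smul_apply, smul_eq_mul, RCLike.ofReal_real_eq_id, id]
    at hRn hdomn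
  set ρ : ℝ := (2⁻¹ : ℝ) ^ n
  have htρ : t * ρ < 1 :=
    calc t * ρ < 2 ^ n * ρ := by gcongr
      _ = 1 := by rw [← mul_pow]; norm_num
  -- `ρ ‖xₙ‖² ≤ R xₙ xₙ ≤ t E xₙ xₙ < t ρ² ‖xₙ‖²`
  have hpos : 0 < ρ * ‖x n‖ ^ 2 := by have := hx_pos n; positivity
  nlinarith

theorem hilbertizable_of_dominating_operator_general
    {X : Type*} [NormedAddCommGroup X] [NormedSpace ℝ X]
    (E : X →L[ℝ] X →L[ℝ] ℝ)
    (hdom : ∀ R : X →L[ℝ] X →L[ℝ] ℝ, (∀ x y : X, R x y = R y x) →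
      ∃ t : ℝ, 0 < t ∧ ∀ x : X, 0 ≤ (t • E - R) x x) :
    ∃ a : ℝ, 0 < a ∧
      (∀ x : X, a * ‖x‖ ^ 2 ≤ E x x) ∧
      (∀ x : X, E x x ≤ ‖E‖ * ‖x‖ ^ 2) ∧
      (∀ x y : X,
        Real.sqrt (E (x + y) (x + y)) ^ 2 + Real.sqrt (E (x - y) (x - y)) ^ 2 =
          2 * Real.sqrt (E x x) ^ 2 + 2 * Real.sqrt (E y y) ^ 2) := by
  obtain ⟨a, ha, hcoer⟩ := exists_coercive_of_dominates_symmetric E hdom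
  have hnonneg (x : X) : 0 ≤ E x x := le_trans (by positivity) (hcoer x)
  refine ⟨a, ha, hcoer, E.apply_self_le_opNorm_mul_sq, fun x y ↦ ?_⟩
  simp only [Real.sq_sqrt (hnonneg _)]
  exact E.toLinearMap₁₂.parallelogram_law x y

/-- If `X` carries a bounded symmetric `E : X → X*` such that for every
bounded symmetric `R` some positive multiple `tE` dominates `R` in the quadratic-form
order, then `⟨Ex,x⟩ ≥ a‖x‖²` for some `a > 0`; hence `x ↦ ⟨Ex,x⟩^{1/2}` is an equivalent
norm satisfying the parallelogram law, so `X` is isomorphic to a Hilbert space. -/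
theorem hilbertizable_of_dominating_operator
    {X : Type*} [NormedAddCommGroup X] [NormedSpace ℝ X] [CompleteSpace X]
    (E : X →L[ℝ] X →L[ℝ] ℝ) (hEsym : ∀ x y : X, E x y = E y x)
    (hdom : ∀ R : X →L[ℝ] X →L[ℝ] ℝ, (∀ x y : X, R x y = R y x) →
      ∃ t : ℝ, 0 < t ∧ ∀ x : X, 0 ≤ (t • E - R) x x) :
    ∃ a : ℝ, 0 < a ∧
      (∀ x : X, a * ‖x‖ ^ 2 ≤ E x x) ∧
      (∀ x : X, E x x ≤ ‖E‖ * ‖x‖ ^ 2) ∧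
      (∀ x y : X,
        Real.sqrt (E (x + y) (x + y)) ^ 2 + Real.sqrt (E (x - y) (x - y)) ^ 2 =
          2 * Real.sqrt (E x x) ^ 2 + 2 * Real.sqrt (E y y) ^ 2) :=
  hilbertizable_of_dominating_operator_general E hdom
end
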